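/- arXiv:1810.06087 — 2 statements merged into one kernel-verified Lean document; each statement's English description precedes it below -/
import Mathlib

section
/- Let g be a discrete-time Markov transition kernel on a σ-compact metric state space X with stationary distribution π that satisfies the strong Feller property, and let S be a Borel set with π(S) > 0. Then the trace kernel g^{(S)} of g on S also satisfies the strong Feller property. (Indeed, ‖g^{(S)}(x,1,·) − g^{(S)}(y,1,·)‖ ≤ ‖g(x,1,·) − g(y,1,·)‖ for all x,y ∈ S.) -/
open MeasureTheory ENNReal

noncomputable section

namespace MixHit

variable {X : Type*} [MeasurableSpace X]

/-- Total variation distance between two Borel measures. -/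
def tv (μ ν : Measure X) : ℝ≥0∞ :=
  ⨆ (A : Set X) (_ : MeasurableSet A), (μ A - ν A) ⊔ (ν A - μ A)

/-- `g` is a Markov transition kernel: each `g x` is a (Borel) probability measure,
measurably in `x`. -/
def IsMarkov (g : X → Measure X) : Prop :=
  (∀ x, IsProbabilityMeasure (g x)) ∧
    ∀ A : Set X, MeasurableSet A → Measurable fun x => g x A

/-- `t`-step transition probabilities (`iterK g 0 x = δ_x`). -/
def iterK (g : X → Measure X) : ℕ → X → Measure X
  | 0 => fun x => Measure.dirac x
  | n + 1 => fun x => (g x).bind (iterK g n)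

/-- `π` is a stationary distribution for `g`. -/
def Stationary (g : X → Measure X) (π : Measure X) : Prop :=
  ∀ A : Set X, MeasurableSet A → ∫⁻ x, g x A ∂π = π A

/-- `g` is reversible with respect to `π`. -/
def Reversible (g : X → Measure X) (π : Measure X) : Prop :=
  ∀ A B : Set X, MeasurableSet A → MeasurableSet B →
    ∫⁻ x in A, g x B ∂π = ∫⁻ x in B, g x A ∂π

/-- The lazy kernel `g_L(x,·) = (1/2) g(x,·) + (1/2) δ_x`. -/
def lazy (g : X → Measure X) : X → Measure X := fun x =>
  (2 : ℝ≥0∞)⁻¹ • g x + (2 : ℝ≥0∞)⁻¹ • Measure.dirac x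

/-- Mixing time `min {t : sup_x ‖g^t(x,·) − π‖ ≤ ε}`, as an element of `ℝ≥0∞`
(`⊤` if there is no such `t`). -/
def mixTime (g : X → Measure X) (π : Measure X) (ε : ℝ≥0∞) : ℝ≥0∞ :=
  ⨅ (t : ℕ) (_ : ∀ x, tv (iterK g t x) π ≤ ε), (t : ℝ≥0∞)

/-- `d̄(t) = sup_{x,y} ‖g^t(x,·) − g^t(y,·)‖`. -/
def dbar (g : X → Measure X) (t : ℕ) : ℝ≥0∞ :=
  ⨆ (x : X) (y : X), tv (iterK g t x) (iterK g t y)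

/-- Standardized mixing time `min {t : d̄(t) ≤ ε}` (`⊤` if there is no such `t`). -/
def stdMix (g : X → Measure X) (ε : ℝ≥0∞) : ℝ≥0∞ :=
  ⨅ (t : ℕ) (_ : dbar g t ≤ ε), (t : ℝ≥0∞)

/-- `P_x(τ_A = t)` for the chain with kernel `g` started at `x`, where
`τ_A = min {t : X_t ∈ A}` (first-step recursion). -/
def hitEq (g : X → Measure X) (A : Set X) : ℕ → X → ℝ≥0∞
  | 0 => fun x => A.indicator (fun _ => 1) x
  | n + 1 => fun x => Aᶜ.indicator (fun x' => ∫⁻ y, hitEq g A n y ∂(g x')) x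

/-- `P_x(τ_A ≤ t)`. -/
def hitLE (g : X → Measure X) (A : Set X) (t : ℕ) (x : X) : ℝ≥0∞ :=
  ∑ s ∈ Finset.range (t + 1), hitEq g A s x

/-- `E_x[τ_A] = ∑_{t ≥ 0} P_x(τ_A > t)`. -/
def expHit (g : X → Measure X) (A : Set X) (x : X) : ℝ≥0∞ :=
  ∑' t : ℕ, (1 - hitLE g A t x)

/-- Maximum hitting time `t_H(α) = sup {E_x[τ_A] : x ∈ X, A Borel, π(A) ≥ α}`. -/
def maxHit (g : X → Measure X) (π : Measure X) (α : ℝ) : ℝ≥0∞ :=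
  ⨆ (x : X) (A : Set X) (_ : MeasurableSet A) (_ : ENNReal.ofReal α ≤ π A),
    expHit g A x

/-- Large hitting time
`τ_g(α) = min {t : inf {P_x(τ_A ≤ t) : x ∈ X, A Borel, π(A) ≥ α} > 0.9}`. -/
def largeHit (g : X → Measure X) (π : Measure X) (α : ℝ) : ℝ≥0∞ :=
  ⨅ (t : ℕ) (_ : (9 / 10 : ℝ≥0∞) <
      ⨅ (x : X) (A : Set X) (_ : MeasurableSet A) (_ : ENNReal.ofReal α ≤ π A),
        hitLE g A t x),
    (t : ℝ≥0∞)

/-- The strong Feller property: continuity of `x ↦ g(x,·)` in total variation. -/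
def StrongFeller [PseudoMetricSpace X] (g : X → Measure X) : Prop :=
  ∀ x : X, ∀ ε : ℝ, 0 < ε → ∃ δ : ℝ, 0 < δ ∧
    ∀ y : X, dist y x < δ → tv (g x) (g y) < ENNReal.ofReal ε

/-- Law of `X_t` on the event that `t` is the first time the chain lies in `S`. -/
def enterDist (g : X → Measure X) (S : Set X) : ℕ → X → Measure X
  | 0 => fun x => (Measure.dirac x).restrict S
  | n + 1 => fun x => Sᶜ.indicator (fun x' => (g x').bind (enterDist g S n)) x

/-- Law of the chain's position at its first entrance (at a time `≥ 0`) into `S`. -/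
def hitMeasure (g : X → Measure X) (S : Set X) (x : X) : Measure X :=
  Measure.sum fun t => enterDist g S t x

/-- One step of the trace of `g` on `S`: take one `g`-step, then run until the
first entrance into `S`. -/
def traceK (g : X → Measure X) (S : Set X) : X → Measure X :=
  fun x => (g x).bind (hitMeasure g S)

/-- The trace of `g` on `S`, viewed as a kernel on the subtype `S`. -/
def traceSub (g : X → Measure X) (S : Set X) : S → Measure S :=
  fun x => (traceK g S (x : X)).comap (Subtype.val)

/-- Normalization of `π` to `S`, as a measure on the subtype `S`. -/
def normSub (π : Measure X) (S : Set X) : Measure S :=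
  (π S)⁻¹ • π.comap (Subtype.val : S → X)

/-- Ergodicity: from every starting point, the chain converges to `π`
in total variation. -/
def ErgodicK (g : X → Measure X) (π : Measure X) : Prop :=
  Stationary g π ∧
    ∀ x : X, Filter.Tendsto (fun t => tv (iterK g t x) π) Filter.atTop (nhds 0)

/-!
The trace kernel sends `x` to `g x` followed by the first-entrance law into `S`, which is a
sub-Markov kernel. Integrating a `[0, 1]`-valued function against two measures gives values
at most their total variation apart (layer cake: every level set is a single event), so
composing with a sub-Markov kernel, and then restricting to `S`, can only shrink the total
variation distance; continuity in total variation therefore passes from `g` to its trace.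
-/

lemma tv_comm (μ ν : Measure X) : tv μ ν = tv ν μ := by
  simp only [tv, sup_comm]

lemma measure_le_add_tv {μ ν : Measure X} {A : Set X} (hA : MeasurableSet A) :
    μ A ≤ ν A + tv μ ν :=
  calc μ A ≤ ν A + (μ A - ν A) := le_add_tsub
    _ ≤ ν A + tv μ ν := by gcongr; exact le_iSup₂_of_le A hA le_sup_left

lemma tv_comap_subtype_le {S : Set X} (hS : MeasurableSet S) (μ ν : Measure X) :
    tv (μ.comap ((↑) : S → X)) (ν.comap (↑)) ≤ tv μ ν := by
  have he : MeasurableEmbedding ((↑) : S → X) := .subtype_coe hS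
  refine iSup₂_le fun A hA => ?_
  rw [he.comap_apply, he.comap_apply]
  exact le_iSup₂_of_le (Subtype.val '' A) (he.measurableSet_image.mpr hA) le_rfl

lemma lintegral_eq_setLIntegral_Ioc_meas_le {h : X → ℝ≥0∞} (hm : Measurable h)
    (hb : ∀ y, h y ≤ 1) (κ : Measure X) :
    ∫⁻ y, h y ∂κ = ∫⁻ t in Set.Ioc (0 : ℝ) 1, κ {a | t ≤ (h a).toReal} := by
  have hne : ∀ y, h y ≠ ∞ := fun y => ((hb y).trans_lt one_lt_top).ne
  have hnull : ∀ t ∈ Set.Ioi (1 : ℝ), κ {a | t ≤ (h a).toReal} = 0 := fun t ht => by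
    convert measure_empty (μ := κ)
    refine Set.eq_empty_of_forall_notMem fun a ha => ?_
    have : (h a).toReal ≤ 1 := toReal_le_of_le_ofReal zero_le_one (by simpa using hb a)
    exact (lt_irrefl _) ((Set.mem_Ioi.mp ht).trans_le (ha.trans this))
  calc ∫⁻ y, h y ∂κ = ∫⁻ y, ENNReal.ofReal (h y).toReal ∂κ := by
        simp only [ofReal_toReal (hne _)]
    _ = ∫⁻ t in Set.Ioi (0 : ℝ), κ {a | t ≤ (h a).toReal} :=
      lintegral_eq_lintegral_meas_le κ (.of_forall fun _ => toReal_nonneg)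
        hm.ennreal_toReal.aemeasurable
    _ = _ := by
      rw [← Set.Ioc_union_Ioi_eq_Ioi zero_le_one,
        lintegral_union measurableSet_Ioi (Set.Ioc_disjoint_Ioi le_rfl),
        setLIntegral_congr_fun measurableSet_Ioi hnull, lintegral_zero, add_zero]

lemma lintegral_le_lintegral_add_tv {μ ν : Measure X} {h : X → ℝ≥0∞} (hm : Measurable h)
    (hb : ∀ y, h y ≤ 1) :
    ∫⁻ y, h y ∂μ ≤ ∫⁻ y, h y ∂ν + tv μ ν := by
  have hlevel : ∀ t : ℝ, MeasurableSet {a | t ≤ (h a).toReal} :=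
    fun t => hm.ennreal_toReal measurableSet_Ici
  calc ∫⁻ y, h y ∂μ = ∫⁻ t in Set.Ioc (0 : ℝ) 1, μ {a | t ≤ (h a).toReal} :=
        lintegral_eq_setLIntegral_Ioc_meas_le hm hb μ
    _ ≤ ∫⁻ t in Set.Ioc (0 : ℝ) 1, (ν {a | t ≤ (h a).toReal} + tv μ ν) :=
        lintegral_mono fun t => measure_le_add_tv (hlevel t)
    _ = ∫⁻ y, h y ∂ν + tv μ ν := by
        rw [lintegral_add_right _ measurable_const, setLIntegral_const, Real.volume_Ioc,
          ← lintegral_eq_setLIntegral_Ioc_meas_le hm hb ν]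
        simp

lemma tv_bind_le {κ : X → Measure X} (hκ : Measurable κ) (hκ1 : ∀ w, κ w Set.univ ≤ 1)
    (μ ν : Measure X) : tv (μ.bind κ) (ν.bind κ) ≤ tv μ ν := by
  refine iSup₂_le fun A hA => ?_
  have hm : Measurable fun w => κ w A := (Measure.measurable_coe hA).comp hκ
  have hb : ∀ w, κ w A ≤ 1 := fun w => (measure_mono (Set.subset_univ A)).trans (hκ1 w)
  rw [Measure.bind_apply hA hκ.aemeasurable, Measure.bind_apply hA hκ.aemeasurable]
  refine sup_le ?_ ?_ <;> rw [tsub_le_iff_right, add_comm]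
  · exact lintegral_le_lintegral_add_tv hm hb
  · exact tv_comm μ ν ▸ lintegral_le_lintegral_add_tv hm hb

lemma IsMarkov.measurable {g : X → Measure X} (hg : IsMarkov g) : Measurable g :=
  Measure.measurable_of_measurable_coe _ hg.2

section Trace

variable {g : X → Measure X} {S : Set X}

lemma enterDist_succ_of_mem {x : X} (hx : x ∈ S) (t : ℕ) : enterDist g S (t + 1) x = 0 := by
  simp [enterDist, hx]

lemma enterDist_succ_of_notMem {x : X} (hx : x ∉ S) (t : ℕ) :
    enterDist g S (t + 1) x = (g x).bind (enterDist g S t) := by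
  simp [enterDist, hx]

lemma enterDist_zero_apply_univ (hS : MeasurableSet S) (x : X) :
    enterDist g S 0 x Set.univ = S.indicator 1 x := by
  simp [enterDist, Measure.dirac_apply' _ hS]

lemma measurable_enterDist (hg : Measurable g) (hS : MeasurableSet S) (t : ℕ) :
    Measurable (enterDist g S t) := by
  induction t with
  | zero =>
    refine Measure.measurable_of_measurable_coe _ fun A hA => ?_
    simp only [enterDist, Measure.restrict_apply hA]
    exact (Measure.measurable_coe (hA.inter hS)).comp Measure.measurable_dirac
  | succ t ih =>
    exact Measurable.piecewise hS.compl (Measure.measurable_bind' ih |>.comp hg)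
      measurable_const

lemma measurable_hitMeasure (hg : Measurable g) (hS : MeasurableSet S) :
    Measurable (hitMeasure g S) :=
  Measure.measurable_of_measurable_coe _ fun A hA => by
    simp only [hitMeasure, Measure.sum_apply _ hA]
    exact .tsum fun t => (Measure.measurable_coe hA).comp (measurable_enterDist hg hS t)

lemma sum_range_enterDist_apply_univ_le_one (hg : ∀ x, IsProbabilityMeasure (g x))
    (hgm : Measurable g) (hS : MeasurableSet S) (n : ℕ) (x : X) :
    ∑ t ∈ Finset.range n, enterDist g S t x Set.univ ≤ 1 := by
  induction n generalizing x with
  | zero => simp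
  | succ n ih =>
    rw [Finset.sum_range_succ', enterDist_zero_apply_univ hS]
    by_cases hx : x ∈ S
    · simp [enterDist_succ_of_mem hx, hx]
    · have hmeas (t : ℕ) : Measurable fun z => enterDist g S t z Set.univ :=
        (Measure.measurable_coe MeasurableSet.univ).comp (measurable_enterDist hgm hS t)
      simp only [enterDist_succ_of_notMem hx, Measure.bind_apply MeasurableSet.univ
        (measurable_enterDist hgm hS _).aemeasurable, Set.indicator_of_notMem hx, add_zero]
      rw [← lintegral_finsetSum _ fun t _ => hmeas t]
      exact (lintegral_mono fun z => ih z).trans_eq (by simp)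

lemma hitMeasure_apply_univ_le_one (hg : ∀ x, IsProbabilityMeasure (g x))
    (hgm : Measurable g) (hS : MeasurableSet S) (x : X) : hitMeasure g S x Set.univ ≤ 1 := by
  rw [hitMeasure, Measure.sum_apply _ MeasurableSet.univ]
  exact ENNReal.tsum_le_of_sum_range_le (sum_range_enterDist_apply_univ_le_one hg hgm hS · x)

lemma tv_traceK_le (hg : IsMarkov g) (hS : MeasurableSet S) (x y : X) :
    tv (traceK g S x) (traceK g S y) ≤ tv (g x) (g y) :=
  tv_bind_le (measurable_hitMeasure hg.measurable hS)
    (hitMeasure_apply_univ_le_one hg.1 hg.measurable hS) _ _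

end Trace

lemma StrongFeller.of_tv_le [PseudoMetricSpace X] {Y : Type*} [MeasurableSpace Y]
    [PseudoMetricSpace Y] {g : X → Measure X} {k : Y → Measure Y} (hg : StrongFeller g)
    (f : Y → X) (hf : Isometry f) (hk : ∀ x y, tv (k x) (k y) ≤ tv (g (f x)) (g (f y))) :
    StrongFeller k := by
  intro x ε hε
  obtain ⟨δ, hδ, hδg⟩ := hg (f x) ε hε
  exact ⟨δ, hδ, fun y hy => (hk x y).trans_lt (hδg (f y) (by rwa [hf.dist_eq]))⟩

theorem stmt5_general {X : Type*} [MetricSpace X] [MeasurableSpace X] (g : X → Measure X)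
    (hg : IsMarkov g) (hSF : StrongFeller g) (S : Set X) (hS : MeasurableSet S) :
    StrongFeller (traceSub g S) ∧
      ∀ x y : X, x ∈ S → y ∈ S →
        tv (traceK g S x) (traceK g S y) ≤ tv (g x) (g y) :=
  ⟨hSF.of_tv_le _ isometry_subtype_coe fun x y =>
      (tv_comap_subtype_le hS _ _).trans (tv_traceK_le hg hS x y),
    fun x y _ _ => tv_traceK_le hg hS x y⟩

/-- the trace of a strong Feller chain is strong Feller; indeed the
trace kernel is a contraction in total variation. -/
theorem stmt5 {X : Type*} [MetricSpace X] [MeasurableSpace X] [BorelSpace X]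
    [SigmaCompactSpace X] (g : X → Measure X) (π : Measure X)
    (hg : IsMarkov g) (hπ : IsProbabilityMeasure π) (hstat : Stationary g π)
    (hSF : StrongFeller g) (S : Set X) (hS : MeasurableSet S) (hpos : 0 < π S) :
    StrongFeller (traceSub g S) ∧
      ∀ x y : X, x ∈ S → y ∈ S →
        tv (traceK g S x) (traceK g S y) ≤ tv (g x) (g y) :=
  stmt5_general g hg hSF S hS

end MixHit
end
end

section
/- There exists a universal constant 0 < C < ∞, not depending on α, such that for every 0 < α < 1/2 and every discrete-time Markov transition kernel g on a σ-compact metric state space X with stationary distribution π, one has t_H(α) ≤ ℓ_H(α) ≤ C · t_H(α), where t_H(α) is the maximum hitting time of g and ℓ_H(α) is the maximum hitting time of the lazy kernel g_L. -/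
open MeasureTheory ENNReal

noncomputable section

namespace MixHit

variable {X : Type*} [MeasurableSpace X]

/-! After `t` steps of the lazy chain, the number of steps of `g` actually taken is
Binomial(t, 1/2), so `P_x(τ^L_A > t) = 2⁻ᵗ ∑ₛ C(t, s) P_x(τ_A > s)`. Summing over `t` and using
`∑ₜ C(t, s) 2⁻ᵗ = 2` gives `E_x[τ^L_A] = 2 E_x[τ_A]` for every `x` and `A`, hence
`ℓ_H(α) = 2 t_H(α)`. -/

lemma tsum_choose_mul_inv_two_pow (s : ℕ) : ∑' t : ℕ, (t.choose s : ℝ≥0∞) * 2⁻¹ ^ t = 2 := by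
  have hhalf : ‖(2⁻¹ : ℝ)‖ < 1 := by norm_num
  have hreal : HasSum (fun k : ℕ => ((k + s).choose s : ℝ) * 2⁻¹ ^ k) (2 ^ (s + 1)) := by
    have h := hasSum_choose_mul_geometric_of_norm_lt_one s hhalf
    rwa [show (1 : ℝ) / (1 - 2⁻¹) ^ (s + 1) = 2 ^ (s + 1) by rw [one_div, ← inv_pow]; norm_num] at h
  have hshift : ∑' k : ℕ, ((k + s).choose s : ℝ≥0∞) * 2⁻¹ ^ k = 2 ^ (s + 1) := by
    rw [← ENNReal.ofReal_ofNat 2, ← ENNReal.ofReal_pow zero_le_two, ← hreal.tsum_eq,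
      ENNReal.ofReal_tsum_of_nonneg (fun k => by positivity) hreal.summable]
    congr! 2 with k
    rw [ENNReal.ofReal_mul (by positivity), ENNReal.ofReal_pow (by positivity),
      ENNReal.ofReal_natCast, ENNReal.ofReal_inv_of_pos two_pos, ENNReal.ofReal_ofNat]
  rw [← Summable.sum_add_tsum_nat_add' (k := s) ENNReal.summable,
    Finset.sum_eq_zero fun i hi => by simp [Nat.choose_eq_zero_of_lt (Finset.mem_range.mp hi)],
    zero_add]
  calc ∑' k : ℕ, ((k + s).choose s : ℝ≥0∞) * 2⁻¹ ^ (k + s)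
      = 2⁻¹ ^ s * ∑' k : ℕ, ((k + s).choose s : ℝ≥0∞) * 2⁻¹ ^ k := by
        rw [← ENNReal.tsum_mul_left]
        exact tsum_congr fun k => by ring
    _ = 2 := by
        rw [hshift, pow_succ, ← mul_assoc, ← mul_pow,
          ENNReal.inv_mul_cancel two_ne_zero ofNat_ne_top, one_pow, one_mul]

lemma tsum_inv_two_pow_mul_sum_choose_mul (u : ℕ → ℝ≥0∞) :
    ∑' t : ℕ, 2⁻¹ ^ t * ∑ s ∈ Finset.range (t + 1), (t.choose s : ℝ≥0∞) * u s
      = 2 * ∑' s, u s := by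
  have hfin : ∀ t : ℕ, ∑ s ∈ Finset.range (t + 1), (t.choose s : ℝ≥0∞) * u s
      = ∑' s, (t.choose s : ℝ≥0∞) * u s := fun t =>
    (tsum_eq_sum fun s hs => by
      simp [Nat.choose_eq_zero_of_lt (by simpa [Nat.lt_succ_iff] using hs)]).symm
  simp_rw [hfin, ← ENNReal.tsum_mul_left]
  rw [ENNReal.tsum_comm]
  refine tsum_congr fun s => ?_
  calc ∑' t : ℕ, 2⁻¹ ^ t * ((t.choose s : ℝ≥0∞) * u s)
      = (∑' t : ℕ, (t.choose s : ℝ≥0∞) * 2⁻¹ ^ t) * u s := by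
        rw [← ENNReal.tsum_mul_right]
        exact tsum_congr fun t => by ring
    _ = 2 * u s := by rw [tsum_choose_mul_inv_two_pow]

section

variable {g : X → Measure X} {A : Set X}

lemma IsMarkov.measurable_lintegral (hg : IsMarkov g) {f : X → ℝ≥0∞} (hf : Measurable f) :
    Measurable fun x => ∫⁻ y, f y ∂g x :=
  (Measure.measurable_lintegral hf).comp (Measure.measurable_of_measurable_coe g hg.2)

lemma isMarkov_lazy (hg : IsMarkov g) : IsMarkov (lazy g) := by
  refine ⟨fun x => ?_, fun A hA => ?_⟩
  · have := hg.1 x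
    constructor
    simp [lazy, ENNReal.inv_two_add_inv_two]
  · have h : (fun x => lazy g x A) = fun x => 2⁻¹ * g x A + 2⁻¹ * A.indicator 1 x := by
      funext x
      simp [lazy, Measure.dirac_apply' x hA]
    rw [h]
    exact ((hg.2 A hA).const_mul _).add ((measurable_one.indicator hA).const_mul _)

lemma lintegral_lazy {f : X → ℝ≥0∞} (hf : Measurable f) (x : X) :
    ∫⁻ y, f y ∂lazy g x = 2⁻¹ * ∫⁻ y, f y ∂g x + 2⁻¹ * f x := by
  simp [lazy, lintegral_add_measure, lintegral_dirac' x hf]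

/-- `P_x(τ_A > t)`. -/
def survival (g : X → Measure X) (A : Set X) : ℕ → X → ℝ≥0∞
  | 0 => Aᶜ.indicator 1
  | t + 1 => Aᶜ.indicator fun x => ∫⁻ y, survival g A t y ∂g x

lemma measurable_survival (hg : IsMarkov g) (hA : MeasurableSet A) :
    ∀ t, Measurable (survival g A t)
  | 0 => measurable_one.indicator hA.compl
  | t + 1 => (hg.measurable_lintegral (measurable_survival hg hA t)).indicator hA.compl

lemma survival_of_mem {x : X} (hx : x ∈ A) (t : ℕ) : survival g A t x = 0 := by
  cases t <;> simp [survival, hx]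

lemma survival_succ_of_notMem {x : X} (hx : x ∉ A) (t : ℕ) :
    survival g A (t + 1) x = ∫⁻ y, survival g A t y ∂g x := by
  simp [survival, hx]

lemma measurable_hitEq (hg : IsMarkov g) (hA : MeasurableSet A) :
    ∀ t, Measurable (hitEq g A t)
  | 0 => measurable_const.indicator hA
  | t + 1 => (hg.measurable_lintegral (measurable_hitEq hg hA t)).indicator hA.compl

lemma hitEq_succ_add_survival_succ_of_notMem (hg : IsMarkov g) (hA : MeasurableSet A) {x : X}
    (hx : x ∉ A) (t : ℕ) :
    hitEq g A (t + 1) x + survival g A (t + 1) x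
      = ∫⁻ y, hitEq g A t y + survival g A t y ∂g x := by
  rw [lintegral_add_left (measurable_hitEq hg hA t), survival_succ_of_notMem hx]
  simp [hitEq, hx]

lemma hitEq_succ_add_survival_succ (hg : IsMarkov g) (hA : MeasurableSet A) :
    ∀ (t : ℕ) (x : X), hitEq g A (t + 1) x + survival g A (t + 1) x = survival g A t x
  | t, x => by
    by_cases hx : x ∈ A
    · simp [hitEq, survival_of_mem hx, hx]
    rw [hitEq_succ_add_survival_succ_of_notMem hg hA hx]
    cases t with
    | zero =>
      have := hg.1 x
      have hone : ∀ y, hitEq g A 0 y + survival g A 0 y = 1 := fun y => by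
        by_cases hy : y ∈ A <;> simp [hitEq, survival, hy]
      rw [lintegral_congr hone]
      simp [survival, hx]
    | succ t =>
      rw [survival_succ_of_notMem hx]
      exact lintegral_congr (hitEq_succ_add_survival_succ hg hA t)

lemma hitLE_add_survival (hg : IsMarkov g) (hA : MeasurableSet A) :
    ∀ (t : ℕ) (x : X), hitLE g A t x + survival g A t x = 1
  | 0, x => by by_cases hx : x ∈ A <;> simp [hitLE, hitEq, survival, hx]
  | t + 1, x => by
    rw [hitLE, Finset.sum_range_succ, add_assoc, hitEq_succ_add_survival_succ hg hA]
    exact hitLE_add_survival hg hA t x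

lemma expHit_eq_tsum_survival (hg : IsMarkov g) (hA : MeasurableSet A) (x : X) :
    expHit g A x = ∑' t, survival g A t x := by
  refine tsum_congr fun t => ENNReal.sub_eq_of_eq_add_rev ?_ (hitLE_add_survival hg hA t x).symm
  exact ne_top_of_le_ne_top one_ne_top (le_self_add.trans_eq (hitLE_add_survival hg hA t x))

lemma survival_lazy (hg : IsMarkov g) (hA : MeasurableSet A) (t : ℕ) (x : X) :
    survival (lazy g) A t x
      = 2⁻¹ ^ t * ∑ s ∈ Finset.range (t + 1), (t.choose s : ℝ≥0∞) * survival g A s x := by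
  induction t generalizing x with
  | zero => simp [survival]
  | succ t ih =>
    by_cases hx : x ∈ A
    · simp [survival_of_mem hx]
    have hint : ∫⁻ y, survival (lazy g) A t y ∂g x = 2⁻¹ ^ t *
        ∑ s ∈ Finset.range (t + 1), (t.choose s : ℝ≥0∞) * survival g A (s + 1) x := by
      simp_rw [ih, survival_succ_of_notMem hx]
      rw [lintegral_const_mul' _ _ (by simp), lintegral_finsetSum _ fun s _ =>
        (measurable_survival hg hA s).const_mul _]
      simp_rw [lintegral_const_mul' _ _ (natCast_ne_top _)]
    rw [survival_succ_of_notMem hx, lintegral_lazy (measurable_survival (isMarkov_lazy hg) hA t),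
      hint, ih, Finset.sum_choose_succ_mul (fun s _ => survival g A s x)]
    ring

lemma expHit_lazy (hg : IsMarkov g) (hA : MeasurableSet A) (x : X) :
    expHit (lazy g) A x = 2 * expHit g A x := by
  simp_rw [expHit_eq_tsum_survival (isMarkov_lazy hg) hA, survival_lazy hg hA,
    tsum_inv_two_pow_mul_sum_choose_mul, expHit_eq_tsum_survival hg hA]

lemma maxHit_lazy (hg : IsMarkov g) (π : Measure X) (α : ℝ) :
    maxHit (lazy g) π α = 2 * maxHit g π α := by
  simp only [maxHit, ENNReal.mul_iSup]
  congr! 8 with x A hA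
  exact expHit_lazy hg hA x

end

/-- comparison of the maximum hitting times of a chain and its lazy
version, with a universal constant not depending on `α`. -/
theorem stmt14 :
    ∃ C : ℝ, 0 < C ∧
      ∀ α : ℝ, 0 < α → α < 1 / 2 →
        ∀ (X : Type) [MetricSpace X] [MeasurableSpace X] [BorelSpace X]
          [SigmaCompactSpace X] (g : X → Measure X) (π : Measure X),
          IsMarkov g → IsProbabilityMeasure π → Stationary g π →
          maxHit g π α ≤ maxHit (lazy g) π α ∧
            maxHit (lazy g) π α ≤ ENNReal.ofReal C * maxHit g π α := by
  refine ⟨2, two_pos, fun α _ _ X _ _ _ _ g π hg _ _ => ?_⟩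
  rw [maxHit_lazy hg, ENNReal.ofReal_ofNat]
  exact ⟨le_mul_of_one_le_left' one_le_two, le_rfl⟩
end MixHit
end
end
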